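/- For A = B = N_XY ⊗ N_XY (two copies of the qubit channel N_XY(ρ) = (XρX+YρY)/2), the quantum SWITCH with control state |+⟩⟨+| yields S_{|+⟩}(A,B)(ρ) = (1/2) C_+(ρ) ⊗ |+⟩⟨+| + (1/2) C_−(ρ) ⊗ |−⟩⟨−|, where C_+(ρ) = (ρ + (Z⊗Z)ρ(Z⊗Z))/2 and C_−(ρ) = ((I⊗Z)ρ(I⊗Z) + (Z⊗I)ρ(Z⊗I))/2. -/
import Mathlib

open Matrix BigOperators Kronecker

noncomputable section

def X : Matrix (Fin 2) (Fin 2) ℂ := !![0, 1; 1, 0]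
def Y : Matrix (Fin 2) (Fin 2) ℂ := !![0, -Complex.I; Complex.I, 0]
def Z : Matrix (Fin 2) (Fin 2) ℂ := !![1, 0; 0, -1]

def P0 : Matrix (Fin 2) (Fin 2) ℂ := !![1, 0; 0, 0]
def P1 : Matrix (Fin 2) (Fin 2) ℂ := !![0, 0; 0, 1]
def Pplus : Matrix (Fin 2) (Fin 2) ℂ := (2 : ℂ)⁻¹ • !![1, 1; 1, 1]
def Pminus : Matrix (Fin 2) (Fin 2) ℂ := (2 : ℂ)⁻¹ • !![1, -1; -1, 1]

def K2 (p : Fin 2 × Fin 2) : Matrix (Fin 2 × Fin 2) (Fin 2 × Fin 2) ℂ :=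
  (((Real.sqrt 2 : ℂ))⁻¹ • (if p.1 = 0 then X else Y)) ⊗ₖ
    (((Real.sqrt 2 : ℂ))⁻¹ • (if p.2 = 0 then X else Y))

def S2 (j k : Fin 2 × Fin 2) : Matrix ((Fin 2 × Fin 2) × Fin 2) ((Fin 2 × Fin 2) × Fin 2) ℂ :=
  (K2 j * K2 k) ⊗ₖ P0 + (K2 k * K2 j) ⊗ₖ P1

def Cplus (ρ : Matrix (Fin 2 × Fin 2) (Fin 2 × Fin 2) ℂ) :
    Matrix (Fin 2 × Fin 2) (Fin 2 × Fin 2) ℂ :=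
  (2 : ℂ)⁻¹ • (ρ + (Z ⊗ₖ Z) * ρ * (Z ⊗ₖ Z))

def Cminus (ρ : Matrix (Fin 2 × Fin 2) (Fin 2 × Fin 2) ℂ) :
    Matrix (Fin 2 × Fin 2) (Fin 2 × Fin 2) ℂ :=
  (2 : ℂ)⁻¹ • (((1 : Matrix (Fin 2) (Fin 2) ℂ) ⊗ₖ Z) * ρ * ((1 : Matrix (Fin 2) (Fin 2) ℂ) ⊗ₖ Z)
    + (Z ⊗ₖ (1 : Matrix (Fin 2) (Fin 2) ℂ)) * ρ * (Z ⊗ₖ (1 : Matrix (Fin 2) (Fin 2) ℂ)))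

/-! ### Auxiliary lemmas -/

lemma kronCT {m n : Type*} (A : Matrix m m ℂ) (B : Matrix n n ℂ) :
    (A ⊗ₖ B)ᴴ = Aᴴ ⊗ₖ Bᴴ := by
  ext ⟨i, j⟩ ⟨k, l⟩
  simp [Matrix.conjTranspose_apply, Matrix.kroneckerMap_apply, star_mul']

lemma hXH : Xᴴ = X := by
  ext i j; fin_cases i <;> fin_cases j <;> simp [X, Matrix.conjTranspose_apply]

lemma hYH : Yᴴ = Y := by
  ext i j; fin_cases i <;> fin_cases j <;> simp [Y, Matrix.conjTranspose_apply]

lemma hXX : X * X = 1 := by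
  ext i j; fin_cases i <;> fin_cases j <;>
    simp [X, Matrix.mul_apply, Fin.sum_univ_two, Matrix.one_apply]

lemma hYY : Y * Y = 1 := by
  ext i j; fin_cases i <;> fin_cases j <;>
    simp [Y, Matrix.mul_apply, Fin.sum_univ_two, Matrix.one_apply]

lemma hXY : X * Y = Complex.I • Z := by
  ext i j; fin_cases i <;> fin_cases j <;>
    simp [X, Y, Z, Matrix.mul_apply, Fin.sum_univ_two]

lemma hYX : Y * X = (-Complex.I) • Z := by
  ext i j; fin_cases i <;> fin_cases j <;>
    simp [X, Y, Z, Matrix.mul_apply, Fin.sum_univ_two]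

lemma K2eq (p : Fin 2 × Fin 2) :
    K2 p = (2 : ℂ)⁻¹ • ((if p.1 = 0 then X else Y) ⊗ₖ (if p.2 = 0 then X else Y)) := by
  have h2 : ((Real.sqrt 2 : ℝ) : ℂ) * ((Real.sqrt 2 : ℝ) : ℂ) = 2 := by
    norm_cast
    exact Real.mul_self_sqrt (by norm_num)
  have h : ((Real.sqrt 2 : ℝ) : ℂ)⁻¹ * ((Real.sqrt 2 : ℝ) : ℂ)⁻¹ = (2 : ℂ)⁻¹ := by
    rw [← mul_inv, h2]
  rw [K2, smul_kronecker, kronecker_smul, smul_smul, h]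

lemma K2mul (j k : Fin 2 × Fin 2) :
    K2 j * K2 k = (4 : ℂ)⁻¹ •
      (((if j.1 = 0 then X else Y) * (if k.1 = 0 then X else Y)) ⊗ₖ
       ((if j.2 = 0 then X else Y) * (if k.2 = 0 then X else Y))) := by
  rw [K2eq, K2eq, smul_mul_assoc, mul_smul_comm, smul_smul, Matrix.mul_kronecker_mul]
  norm_num

lemma hK2H (p : Fin 2 × Fin 2) : (K2 p)ᴴ = K2 p := by
  rw [K2eq, Matrix.conjTranspose_smul, kronCT, apply_ite conjTranspose,
    apply_ite conjTranspose, hXH, hYH]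
  simp

lemma hKmulH (j k : Fin 2 × Fin 2) : (K2 j * K2 k)ᴴ = K2 k * K2 j := by
  rw [Matrix.conjTranspose_mul, hK2H, hK2H]

lemma hP0H : P0ᴴ = P0 := by
  ext i j; fin_cases i <;> fin_cases j <;> simp [P0, Matrix.conjTranspose_apply]

lemma hP1H : P1ᴴ = P1 := by
  ext i j; fin_cases i <;> fin_cases j <;> simp [P1, Matrix.conjTranspose_apply]

lemma c1 : P0 * Pplus = (2 : ℂ)⁻¹ • !![1, 1; 0, 0] := by
  rw [Pplus, mul_smul_comm]
  congr 1
  ext i j; fin_cases i <;> fin_cases j <;>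
    simp [P0, Matrix.mul_apply, Fin.sum_univ_two]

lemma c2 : P1 * Pplus = (2 : ℂ)⁻¹ • !![0, 0; 1, 1] := by
  rw [Pplus, mul_smul_comm]
  congr 1
  ext i j; fin_cases i <;> fin_cases j <;>
    simp [P1, Matrix.mul_apply, Fin.sum_univ_two]

lemma c3 : (!![1, 1; 0, 0] : Matrix (Fin 2) (Fin 2) ℂ) * P0 = !![1, 0; 0, 0] := by
  ext i j; fin_cases i <;> fin_cases j <;>
    simp [P0, Matrix.mul_apply, Fin.sum_univ_two]

lemma c4 : (!![1, 1; 0, 0] : Matrix (Fin 2) (Fin 2) ℂ) * P1 = !![0, 1; 0, 0] := by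
  ext i j; fin_cases i <;> fin_cases j <;>
    simp [P1, Matrix.mul_apply, Fin.sum_univ_two]

lemma c5 : (!![0, 0; 1, 1] : Matrix (Fin 2) (Fin 2) ℂ) * P0 = !![0, 0; 1, 0] := by
  ext i j; fin_cases i <;> fin_cases j <;>
    simp [P0, Matrix.mul_apply, Fin.sum_univ_two]

lemma c6 : (!![0, 0; 1, 1] : Matrix (Fin 2) (Fin 2) ℂ) * P1 = !![0, 0; 0, 1] := by
  ext i j; fin_cases i <;> fin_cases j <;>
    simp [P1, Matrix.mul_apply, Fin.sum_univ_two]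

lemma hsplitP : (!![1, 1; 1, 1] : Matrix (Fin 2) (Fin 2) ℂ) =
    !![1, 0; 0, 0] + !![0, 1; 0, 0] + !![0, 0; 1, 0] + !![0, 0; 0, 1] := by
  ext i j; fin_cases i <;> fin_cases j <;> simp

lemma hsplitM : (!![1, -1; -1, 1] : Matrix (Fin 2) (Fin 2) ℂ) =
    !![1, 0; 0, 0] + (-1 : ℂ) • !![0, 1; 0, 0] + (-1 : ℂ) • !![0, 0; 1, 0] + !![0, 0; 0, 1] := by
  ext i j; fin_cases i <;> fin_cases j <;> simp

lemma term_eq (j k : Fin 2 × Fin 2) (ρ : Matrix (Fin 2 × Fin 2) (Fin 2 × Fin 2) ℂ) :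
    S2 j k * (ρ ⊗ₖ Pplus) * (S2 j k)ᴴ = (2 : ℂ)⁻¹ •
      ( ((K2 j * K2 k) * ρ * (K2 k * K2 j)) ⊗ₖ !![1, 0; 0, 0]
      + ((K2 j * K2 k) * ρ * (K2 j * K2 k)) ⊗ₖ !![0, 1; 0, 0]
      + ((K2 k * K2 j) * ρ * (K2 k * K2 j)) ⊗ₖ !![0, 0; 1, 0]
      + ((K2 k * K2 j) * ρ * (K2 j * K2 k)) ⊗ₖ !![0, 0; 0, 1] ) := by
  rw [S2]
  simp only [Matrix.conjTranspose_add, kronCT, hP0H, hP1H, hKmulH]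
  simp only [add_mul, mul_add, ← Matrix.mul_kronecker_mul, c1, c2, kronecker_smul,
    smul_mul_assoc, c3, c4, c5, c6, smul_add]
  abel

/-- For `A = B = N_XY ⊗ N_XY`, the quantum SWITCH with control state `|+⟩⟨+|` gives
`S_{|+⟩}(A, B)(ρ) = (1/2) C₊(ρ) ⊗ |+⟩⟨+| + (1/2) C₋(ρ) ⊗ |−⟩⟨−|`. -/
theorem switch_NXY_pair (ρ : Matrix (Fin 2 × Fin 2) (Fin 2 × Fin 2) ℂ) :
    ∑ j : Fin 2 × Fin 2, ∑ k : Fin 2 × Fin 2, S2 j k * (ρ ⊗ₖ Pplus) * (S2 j k)ᴴ =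
      (2 : ℂ)⁻¹ • (Cplus ρ ⊗ₖ Pplus) + (2 : ℂ)⁻¹ • (Cminus ρ ⊗ₖ Pminus) := by
  simp only [term_eq]
  simp only [Fintype.sum_prod_type, Fin.sum_univ_two]
  simp only [K2mul, Fin.reduceEq, reduceIte, ite_true, ite_false]
  simp only [hXX, hXY, hYX, hYY, smul_mul_assoc, mul_smul_comm, smul_smul,
    Matrix.kronecker_smul, Matrix.smul_kronecker, Matrix.one_kronecker_one,
    one_mul, mul_one, smul_add]
  simp only [Cplus, Cminus, Pplus, Pminus, hsplitP, hsplitM,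
    Matrix.add_kronecker, Matrix.kronecker_add, Matrix.kronecker_smul,
    Matrix.smul_kronecker, smul_add, smul_smul]
  match_scalars <;> ring_nf <;> norm_num [Complex.I_sq, Complex.I_pow_four]
end
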